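/- Suppose a coordinate update has the form Δx_i = Σ_{j∈N(i)} ((x_i - x_j)/‖x_i - x_j‖) · w_ij, where each scalar weight w_ij is E(3)-invariant in the coordinates. Then the updated coordinates x_i' := x_i + Δx_i are E(3)-equivariant: if all inputs are transformed by x ↦ R x + t (R orthogonal), then the updated coordinate transforms to R x_i' + t. -/

import Mathlib

/-!
The map `x ↦ R x + t` is an affine isometry. It sends each difference `x_i - x_j` to its image
under the linear part `R` without changing its norm, so each unit direction of the update is
rotated by `R`; since the weights are invariant and `R` is linear, the whole displacement is
rotated by `R`, and adding it to the transformed base point gives `R x_i' + t`.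
-/

open Matrix

/-- Matrix action on Euclidean space. -/
noncomputable def mulVecE {m n : ℕ} (A : Matrix (Fin m) (Fin n) ℝ)
    (x : EuclideanSpace ℝ (Fin n)) : EuclideanSpace ℝ (Fin m) :=
  (EuclideanSpace.equiv (Fin m) ℝ).symm (A.mulVec x)

section CoordinateUpdate

variable {ι V V₂ P P₂ : Type*} [SeminormedAddCommGroup V] [NormedSpace ℝ V]
  [PseudoMetricSpace P] [NormedAddTorsor V P] [SeminormedAddCommGroup V₂] [NormedSpace ℝ V₂]
  [PseudoMetricSpace P₂] [NormedAddTorsor V₂ P₂]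

noncomputable def coordinateUpdate (s : Finset ι) (c : ι → ℝ) (y : ι → P) (x : P) : P :=
  (∑ j ∈ s, c j • (‖x -ᵥ y j‖⁻¹ • (x -ᵥ y j))) +ᵥ x

theorem AffineIsometry.map_coordinateUpdate (f : P →ᵃⁱ[ℝ] P₂) (s : Finset ι) (c : ι → ℝ)
    (y : ι → P) (x : P) :
    f (coordinateUpdate s c y x) = coordinateUpdate s c (f ∘ y) (f x) := by
  simp only [coordinateUpdate, f.map_vadd, map_sum, map_smul, Function.comp_apply,
    ← f.map_vsub, f.linearIsometry.norm_map]

end CoordinateUpdate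

section Orthogonal

variable {n : Type*} [Fintype n] [DecidableEq n] {R : Matrix n n ℝ}

theorem Matrix.norm_toEuclideanLin_of_transpose_mul_self (hR : Rᵀ * R = 1)
    (x : EuclideanSpace ℝ n) : ‖toEuclideanLin R x‖ = ‖x‖ := by
  have h : inner ℝ (toEuclideanLin R x) (toEuclideanLin R x) = inner ℝ x x := by
    rw [← LinearMap.adjoint_inner_left, ← toEuclideanLin_conjTranspose_eq_adjoint,
      conjTranspose_eq_transpose_of_trivial, ← LinearMap.comp_apply, ← toLpLin_mul_same, hR,
      toLpLin_one, LinearMap.id_apply]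
  rw [norm_eq_sqrt_real_inner, norm_eq_sqrt_real_inner x, h]

noncomputable def Matrix.toEuclideanLinearIsometry (hR : Rᵀ * R = 1) :
    EuclideanSpace ℝ n →ₗᵢ[ℝ] EuclideanSpace ℝ n :=
  { toEuclideanLin R with norm_map' := norm_toEuclideanLin_of_transpose_mul_self hR }

end Orthogonal

theorem coordinate_update_equivariant_general {N : ℕ} {ι : Type*}
    (w : ι → (Fin N → EuclideanSpace ℝ (Fin 3)) → ℝ)
    (xs : Fin N → EuclideanSpace ℝ (Fin 3)) (i : Fin N) (Nbr : Finset ι)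
    (nb : ι → Fin N)
    (R : Matrix (Fin 3) (Fin 3) ℝ) (hR : Rᵀ * R = 1) (t : EuclideanSpace ℝ (Fin 3))
    (hw : ∀ j (ys : Fin N → EuclideanSpace ℝ (Fin 3)),
      w j (fun p => mulVecE R (ys p) + t) = w j ys) :
    ((mulVecE R (xs i) + t) +
        ∑ j ∈ Nbr, w j (fun p => mulVecE R (xs p) + t) •
          ((‖(mulVecE R (xs i) + t) - (mulVecE R (xs (nb j)) + t)‖)⁻¹ •
            ((mulVecE R (xs i) + t) - (mulVecE R (xs (nb j)) + t)))) =
      mulVecE R (xs i + ∑ j ∈ Nbr,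
          w j xs • ((‖xs i - xs (nb j)‖)⁻¹ • (xs i - xs (nb j)))) + t := by
  let f := (AffineIsometryEquiv.vaddConst ℝ t).toAffineIsometry.comp
    (toEuclideanLinearIsometry hR).toAffineIsometry
  have hf : ∀ x, f x = mulVecE R x + t := fun _ => rfl
  have h := f.map_coordinateUpdate Nbr (fun j => w j xs) (xs ∘ nb) (xs i)
  simp only [coordinateUpdate, hf, Function.comp_apply, vadd_eq_add, vsub_eq_sub] at h
  simp only [hw]
  rw [add_comm (xs i), add_comm (mulVecE R (xs i) + t)]
  exact h.symm

theorem coordinate_update_equivariant {N : ℕ} {ι : Type*}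
    (w : ι → (Fin N → EuclideanSpace ℝ (Fin 3)) → ℝ)
    (xs : Fin N → EuclideanSpace ℝ (Fin 3)) (i : Fin N) (Nbr : Finset ι)
    (nb : ι → Fin N) (hne : ∀ j ∈ Nbr, xs i ≠ xs (nb j))
    (R : Matrix (Fin 3) (Fin 3) ℝ) (hR : Rᵀ * R = 1) (t : EuclideanSpace ℝ (Fin 3))
    (hw : ∀ j (ys : Fin N → EuclideanSpace ℝ (Fin 3)),
      w j (fun p => mulVecE R (ys p) + t) = w j ys) :
    ((mulVecE R (xs i) + t) +
        ∑ j ∈ Nbr, w j (fun p => mulVecE R (xs p) + t) •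
          ((‖(mulVecE R (xs i) + t) - (mulVecE R (xs (nb j)) + t)‖)⁻¹ •
            ((mulVecE R (xs i) + t) - (mulVecE R (xs (nb j)) + t)))) =
      mulVecE R (xs i + ∑ j ∈ Nbr,
          w j xs • ((‖xs i - xs (nb j)‖)⁻¹ • (xs i - xs (nb j)))) + t :=
  coordinate_update_equivariant_general w xs i Nbr nb R hR t hw
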